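/- The supremum of ρ(v) over all families v = (v_k)_{k∈S} with every v_k ∈ [0,1) equals ρ; in particular, the function t ↦ ρ((t)_{k∈S}) (all coordinates equal to t) tends to ρ as t → 1 from the left. -/

import Mathlib

/-!
On `[0, 1]` the perturbed series `F_v` is dominated by `B`, and `F_v(0) ≥ 0`, so the intermediate
value theorem puts a root of `F_v` in `[0, ρ]`: every `ρ(v)` is at most `ρ`. Conversely `B` is
positive on `[0, ρ)`, hence bounded below by some `δ > 0` on `[0, ρ - ε]`, while
`F_t = B - (1 - t) ∑_{k ∈ S} b_k u^k` differs from `B` by at most `(1 - t) ∑_{k ∈ S} b_k`. For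
`t` close to `1` the function `F_t` therefore has no root in `[0, ρ - ε]`, so `ρ(t) → ρ`, and the
supremum is `ρ` as well.
-/

open Filter Set Topology

lemma le_of_isLeast_zeros_of_nonpos {f : ℝ → ℝ} {r u : ℝ}
    (hr : IsLeast {x ∈ Icc (0 : ℝ) 1 | f x = 0} r) (hf : ContinuousOn f (Icc 0 1))
    (hf0 : 0 ≤ f 0) (hu : u ∈ Icc (0 : ℝ) 1) (hfu : f u ≤ 0) : r ≤ u := by
  obtain ⟨x, hx, hx0⟩ :=
    intermediate_value_Icc' hu.1 (hf.mono (Icc_subset_Icc le_rfl hu.2)) ⟨hfu, hf0⟩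
  exact (hr.2 ⟨⟨hx.1, hx.2.trans hu.2⟩, hx0⟩).trans hx.2

section PowerSeries

variable {c d : ℕ → ℝ}

lemma norm_mul_pow_le (c : ℕ → ℝ) {u : ℝ} (hu : ‖u‖ ≤ 1) (j : ℕ) : ‖c j * u ^ j‖ ≤ ‖c j‖ := by
  rw [norm_mul, norm_pow]
  exact mul_le_of_le_one_right (norm_nonneg _) (pow_le_one₀ (norm_nonneg u) hu)

lemma summable_mul_pow (hc : Summable c) {u : ℝ} (hu : ‖u‖ ≤ 1) :
    Summable fun j => c j * u ^ j :=
  hc.norm.of_norm_bounded (norm_mul_pow_le c hu)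

lemma continuousOn_tsum_mul_pow (hc : Summable c) :
    ContinuousOn (fun u : ℝ => ∑' j, c j * u ^ j) (Metric.closedBall 0 1) :=
  continuousOn_tsum (fun j => (continuous_const.mul (continuous_pow j)).continuousOn) hc.norm
    fun j _ hu => norm_mul_pow_le c (mem_closedBall_zero_iff.1 hu) j

lemma continuousOn_Icc_tsum_mul_pow (hc : Summable c) :
    ContinuousOn (fun u : ℝ => ∑' j, c j * u ^ j) (Icc 0 1) :=
  (continuousOn_tsum_mul_pow hc).mono fun u hu => by
    rw [Real.closedBall_eq_Icc]
    exact ⟨by linarith [hu.1], by linarith [hu.2]⟩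

lemma tsum_mul_zero_pow (c : ℕ → ℝ) : ∑' j, c j * (0 : ℝ) ^ j = c 0 := by
  rw [tsum_eq_single 0 fun j hj => by rw [zero_pow hj, mul_zero], pow_zero, mul_one]

lemma tsum_mul_pow_le_tsum_mul_pow (hc : Summable c) (hd : Summable d) (hcd : ∀ j, c j ≤ d j)
    {u : ℝ} (hu : u ∈ Icc (0 : ℝ) 1) : ∑' j, c j * u ^ j ≤ ∑' j, d j * u ^ j := by
  have hu' : ‖u‖ ≤ 1 := by rw [Real.norm_of_nonneg hu.1]; exact hu.2
  exact (summable_mul_pow hc hu').tsum_le_tsum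
    (fun j => mul_le_mul_of_nonneg_right (hcd j) (pow_nonneg hu.1 j)) (summable_mul_pow hd hu')

end PowerSeries

section ScaledCoeff

variable {b : ℕ → ℝ} {S : Finset ℕ}

/-- The coefficient sequence of `F_v`. -/
def scaledCoeff (b : ℕ → ℝ) (S : Finset ℕ) (v : S → ℝ) (j : ℕ) : ℝ :=
  if h : j ∈ S then b j * v ⟨j, h⟩ else b j

lemma scaledCoeff_mul_pow (v : S → ℝ) (j : ℕ) (u : ℝ) :
    scaledCoeff b S v j * u ^ j = if h : j ∈ S then b j * v ⟨j, h⟩ * u ^ j else b j * u ^ j :=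
  dite_mul ..

lemma abs_scaledCoeff_le {v : S → ℝ} (hv : ∀ k, v k ∈ Icc (0 : ℝ) 1) (j : ℕ) :
    |scaledCoeff b S v j| ≤ |b j| := by
  unfold scaledCoeff
  split_ifs with h
  · rw [abs_mul]
    exact mul_le_of_le_one_right (abs_nonneg _) (abs_le.2 ⟨by linarith [(hv ⟨j, h⟩).1], (hv _).2⟩)
  · exact le_rfl

lemma summable_scaledCoeff (hb : Summable b) {v : S → ℝ} (hv : ∀ k, v k ∈ Icc (0 : ℝ) 1) :
    Summable (scaledCoeff b S v) :=
  hb.norm.of_norm_bounded fun j => abs_scaledCoeff_le hv j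

lemma scaledCoeff_nonneg {j : ℕ} (hj : 0 ≤ b j) {v : S → ℝ} (hv : ∀ k, 0 ≤ v k) :
    0 ≤ scaledCoeff b S v j := by
  unfold scaledCoeff
  split_ifs
  exacts [mul_nonneg hj (hv _), hj]

lemma scaledCoeff_le (hbS : ∀ k ∈ S, 0 ≤ b k) {v : S → ℝ} (hv : ∀ k, v k ≤ 1) (j : ℕ) :
    scaledCoeff b S v j ≤ b j := by
  unfold scaledCoeff
  split_ifs with h
  exacts [mul_le_of_le_one_right (hbS j h) (hv _), le_rfl]

lemma tsum_scaledCoeff_const_mul_pow (hb : Summable b) (t : ℝ) {u : ℝ} (hu : ‖u‖ ≤ 1) :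
    ∑' j, scaledCoeff b S (fun _ => t) j * u ^ j =
      ∑' j, b j * u ^ j - (1 - t) * ∑ k ∈ S, b k * u ^ k := by
  have hS : Summable fun j => if j ∈ S then (1 - t) * (b j * u ^ j) else 0 :=
    summable_of_ne_finset_zero fun j hj => if_neg hj
  have hterm : (fun j => scaledCoeff b S (fun _ => t) j * u ^ j) =
      fun j => b j * u ^ j - if j ∈ S then (1 - t) * (b j * u ^ j) else 0 := by
    ext j
    unfold scaledCoeff
    split_ifs <;> ring
  rw [hterm, (summable_mul_pow hb hu).tsum_sub hS, tsum_eq_sum fun j hj => if_neg hj,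
    Finset.sum_ite_of_true fun _ hj => hj, Finset.mul_sum]

lemma tsum_sub_le_tsum_scaledCoeff_const (hbS : ∀ k ∈ S, 0 ≤ b k) (hb : Summable b) {t : ℝ}
    (ht : t ≤ 1) {u : ℝ} (hu : u ∈ Icc (0 : ℝ) 1) :
    ∑' j, b j * u ^ j - (1 - t) * ∑ k ∈ S, b k ≤
      ∑' j, scaledCoeff b S (fun _ => t) j * u ^ j := by
  rw [tsum_scaledCoeff_const_mul_pow hb t (by rw [Real.norm_of_nonneg hu.1]; exact hu.2)]
  have hpart : ∑ k ∈ S, b k * u ^ k ≤ ∑ k ∈ S, b k :=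
    Finset.sum_le_sum fun k hk => mul_le_of_le_one_right (hbS k hk) (pow_le_one₀ hu.1 hu.2)
  nlinarith

end ScaledCoeff

section Roots

variable {b : ℕ → ℝ} {S : Finset ℕ} {ρ : ℝ}

lemma tsum_mul_pow_pos_of_lt_isLeast (hb0 : 0 ≤ b 0) (hb : Summable b)
    (hρ : IsLeast {u ∈ Icc (0 : ℝ) 1 | ∑' j, b j * u ^ j = 0} ρ) {u : ℝ} (hu : 0 ≤ u)
    (huρ : u < ρ) : 0 < ∑' j, b j * u ^ j := by
  by_contra! hneg
  have := le_of_isLeast_zeros_of_nonpos hρ (continuousOn_Icc_tsum_mul_pow hb)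
    (by rwa [tsum_mul_zero_pow]) ⟨hu, huρ.le.trans hρ.1.1.2⟩ hneg
  linarith

lemma le_of_isLeast_scaledCoeff (hb0 : 0 ≤ b 0) (hbS : ∀ k ∈ S, 0 ≤ b k) (hb : Summable b)
    (hρ : IsLeast {u ∈ Icc (0 : ℝ) 1 | ∑' j, b j * u ^ j = 0} ρ) {v : S → ℝ}
    (hv : ∀ k, v k ∈ Icc (0 : ℝ) 1) {r : ℝ}
    (hr : IsLeast {u ∈ Icc (0 : ℝ) 1 | ∑' j, scaledCoeff b S v j * u ^ j = 0} r) : r ≤ ρ := by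
  have hFv := summable_scaledCoeff hb hv
  refine le_of_isLeast_zeros_of_nonpos hr (continuousOn_Icc_tsum_mul_pow hFv) ?_ hρ.1.1 ?_
  · rw [tsum_mul_zero_pow]
    exact scaledCoeff_nonneg hb0 fun k => (hv k).1
  · rw [← hρ.1.2]
    exact tsum_mul_pow_le_tsum_mul_pow hFv hb (scaledCoeff_le hbS fun k => (hv k).2) hρ.1.1

lemma eventually_sub_lt_of_isLeast_scaledCoeff_const (hb0 : 0 ≤ b 0) (hbS : ∀ k ∈ S, 0 ≤ b k)
    (hb : Summable b) (hρ : IsLeast {u ∈ Icc (0 : ℝ) 1 | ∑' j, b j * u ^ j = 0} ρ) {ε : ℝ}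
    (hε : 0 < ε) :
    ∀ᶠ t in 𝓝[<] 1, ∀ r,
      IsLeast {u ∈ Icc (0 : ℝ) 1 | ∑' j, scaledCoeff b S (fun _ => t) j * u ^ j = 0} r →
        ρ - ε < r := by
  rcases lt_or_ge (ρ - ε) 0 with hneg | ha
  · exact Eventually.of_forall fun t r hr => hneg.trans_le hr.1.1.1
  have ha1 : ρ - ε ≤ 1 := by linarith [hρ.1.1.2]
  obtain ⟨x, hx, hxmin⟩ := isCompact_Icc.exists_isMinOn (nonempty_Icc.2 ha)
    ((continuousOn_Icc_tsum_mul_pow hb).mono (Icc_subset_Icc le_rfl ha1))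
  have hδ : 0 < ∑' j, b j * x ^ j :=
    tsum_mul_pow_pos_of_lt_isLeast hb0 hb hρ hx.1 (by linarith [hx.2])
  have hgap : ∀ᶠ t in 𝓝 (1 : ℝ), (1 - t) * ∑ k ∈ S, b k < ∑' j, b j * x ^ j := by
    refine Tendsto.eventually_lt_const hδ ?_
    exact (by fun_prop : Continuous fun t : ℝ => (1 - t) * ∑ k ∈ S, b k).tendsto' 1 0 (by simp)
  filter_upwards [nhdsWithin_le_nhds hgap, self_mem_nhdsWithin] with t hgap ht r hr
  by_contra! hle
  have hmin : ∑' j, b j * x ^ j ≤ ∑' j, b j * r ^ j := hxmin ⟨hr.1.1.1, hle⟩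
  have hFr := tsum_sub_le_tsum_scaledCoeff_const hbS hb (le_of_lt ht) hr.1.1
  linarith [hr.1.2]

end Roots

theorem stmt_7_general (b : ℕ → ℝ)
    (hb_nonneg : ∀ j, j ≠ 1 → 0 ≤ b j)
    (hb_sum : Summable b)
    (ρ : ℝ) (hρ : IsLeast {u ∈ Set.Icc (0:ℝ) 1 | (∑' j : ℕ, b j * u ^ j) = 0} ρ)
    (S : Finset ℕ) (hS1 : 1 ∉ S)
    (ρfun : (S → ℝ) → ℝ)
    (hρfun : ∀ v : S → ℝ, (∀ k, v k ∈ Set.Icc (0:ℝ) 1) →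
      IsLeast {u ∈ Set.Icc (0:ℝ) 1 |
        (∑' j : ℕ, if h : j ∈ S then b j * v ⟨j, h⟩ * u ^ j else b j * u ^ j) = 0} (ρfun v)) :
    sSup (ρfun '' {v : S → ℝ | ∀ k, v k ∈ Set.Ico (0:ℝ) 1}) = ρ ∧
    Tendsto (fun t : ℝ => ρfun (fun _ => t)) (nhdsWithin 1 (Set.Iio 1)) (nhds ρ) := by
  have hb0 : 0 ≤ b 0 := hb_nonneg 0 zero_ne_one
  have hbS : ∀ k ∈ S, 0 ≤ b k := fun k hk => hb_nonneg k (ne_of_mem_of_not_mem hk hS1)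
  have hF (v : S → ℝ) (hv : ∀ k, v k ∈ Icc (0 : ℝ) 1) :
      IsLeast {u ∈ Icc (0 : ℝ) 1 | ∑' j, scaledCoeff b S v j * u ^ j = 0} (ρfun v) := by
    simpa only [scaledCoeff_mul_pow] using hρfun v hv
  have hle (v : S → ℝ) (hv : ∀ k, v k ∈ Ico (0 : ℝ) 1) : ρfun v ≤ ρ :=
    le_of_isLeast_scaledCoeff hb0 hbS hb_sum hρ (fun k => Ico_subset_Icc_self (hv k))
      (hF v fun k => Ico_subset_Icc_self (hv k))
  have hIco : ∀ᶠ t in 𝓝[<] (1 : ℝ), t ∈ Ico (0 : ℝ) 1 := Ico_mem_nhdsLT one_pos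
  have hlim : Tendsto (fun t : ℝ => ρfun fun _ => t) (𝓝[<] 1) (𝓝 ρ) := by
    refine tendsto_order.2 ⟨fun a ha => ?_, fun a ha => ?_⟩
    · filter_upwards [eventually_sub_lt_of_isLeast_scaledCoeff_const hb0 hbS hb_sum hρ
        (sub_pos.2 ha), hIco] with t ht htI
      simpa using ht _ (hF _ fun _ => Ico_subset_Icc_self htI)
    · filter_upwards [hIco] with t ht using (hle _ fun _ => ht).trans_lt ha
  have hub : ρ ∈ upperBounds (ρfun '' {v : S → ℝ | ∀ k, v k ∈ Ico (0 : ℝ) 1}) :=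
    forall_mem_image.2 fun v hv => hle v hv
  refine ⟨le_antisymm ?_ (le_of_tendsto hlim ?_), hlim⟩
  · exact csSup_le ⟨_, fun _ => 0, fun _ => ⟨le_rfl, one_pos⟩, rfl⟩ hub
  · filter_upwards [hIco] with t ht using le_csSup ⟨ρ, hub⟩ ⟨fun _ => t, fun _ => ht, rfl⟩

theorem stmt_7 (b : ℕ → ℝ)
    (hb_nonneg : ∀ j, j ≠ 1 → 0 ≤ b j) (hb1 : b 1 < 0)
    (hb_sum : Summable b) (hb_total : ∑' j, b j = 0)
    (ρ : ℝ) (hρ : IsLeast {u ∈ Set.Icc (0:ℝ) 1 | (∑' j : ℕ, b j * u ^ j) = 0} ρ)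
    (S : Finset ℕ) (hS : S.Nonempty) (hS1 : 1 ∉ S)
    (hbS : ∀ k ∈ S, 0 < b k)
    (ρfun : (S → ℝ) → ℝ)
    (hρfun : ∀ v : S → ℝ, (∀ k, v k ∈ Set.Icc (0:ℝ) 1) →
      IsLeast {u ∈ Set.Icc (0:ℝ) 1 |
        (∑' j : ℕ, if h : j ∈ S then b j * v ⟨j, h⟩ * u ^ j else b j * u ^ j) = 0} (ρfun v)) :
    sSup (ρfun '' {v : S → ℝ | ∀ k, v k ∈ Set.Ico (0:ℝ) 1}) = ρ ∧
    Tendsto (fun t : ℝ => ρfun (fun _ => t)) (nhdsWithin 1 (Set.Iio 1)) (nhds ρ) :=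
  stmt_7_general b hb_nonneg hb_sum ρ hρ S hS1 ρfun hρfun
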